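/- arXiv:2110.06449 — 7 statements merged into one kernel-verified Lean document; each statement's English description precedes it below -/
import Mathlib

section
/- Let τ_t be the greatest integer such that for every set 𝒯 of at most τ_t valid t-way interactions, there exists a valid test case covering none of them. Then for d ≤ τ_t and t > 0, every (d, t)-CDA is also a (d-1, t)-CDA, hence a (d̄, t)-CDA; thus (d, t)-CDAs and (d̄, t)-CDAs are equivalent. -/
namespace CDA

variable {k : ℕ} {V : Fin k → Type}

/-- A test case covers an interaction `T` (a partial assignment) iff it agrees
with `T` on all parameters where `T` is defined. -/
def Covers (T : ∀ i : Fin k, Option (V i)) (σ : ∀ i : Fin k, V i) : Prop :=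
  ∀ (i : Fin k) (v : V i), T i = some v → σ i = v

/-- Interaction `T₁` is a sub-interaction of `T₂`. -/
def Sub (T₁ T₂ : ∀ i : Fin k, Option (V i)) : Prop :=
  ∀ (i : Fin k) (v : V i), T₁ i = some v → T₂ i = some v

/-- The strength of an interaction: the number of parameters it assigns. -/
def strength (T : ∀ i : Fin k, Option (V i)) : ℕ :=
  (Finset.univ.filter (fun i => (T i).isSome)).card

/-- ρ_A(T): the set of rows of the array `A` covering the interaction `T`. -/
def rho (A : Set (∀ i : Fin k, V i)) (T : ∀ i : Fin k, Option (V i)) :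
    Set (∀ i : Fin k, V i) :=
  {σ ∈ A | Covers T σ}

/-- ρ_A(𝒯): the set of rows of `A` covering at least one interaction in `𝒯`. -/
def rhoS (A : Set (∀ i : Fin k, V i)) (𝒯 : Set (∀ i : Fin k, Option (V i))) :
    Set (∀ i : Fin k, V i) :=
  {σ ∈ A | ∃ T ∈ 𝒯, Covers T σ}

/-- An interaction is valid (w.r.t. the set `R` of valid test cases)
iff some valid test case covers it. -/
def ValidInt (R : Set (∀ i : Fin k, V i)) (T : ∀ i : Fin k, Option (V i)) : Prop :=
  ∃ σ ∈ R, Covers T σ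

/-- `𝒯` masks `T`: `T ∉ 𝒯` and every valid test case covering `T`
covers some member of `𝒯`. -/
def Masks (R : Set (∀ i : Fin k, V i)) (𝒯 : Set (∀ i : Fin k, Option (V i)))
    (T : ∀ i : Fin k, Option (V i)) : Prop :=
  T ∉ 𝒯 ∧ ∀ σ ∈ R, Covers T σ → ∃ T' ∈ 𝒯, Covers T' σ

/-- The set of valid interactions of strength exactly `t`. -/
def VI (R : Set (∀ i : Fin k, V i)) (t : ℕ) : Set (∀ i : Fin k, Option (V i)) :=
  {T | ValidInt R T ∧ strength T = t}

/-- The set of valid interactions of strength at most `t`. -/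
def VIbar (R : Set (∀ i : Fin k, V i)) (t : ℕ) : Set (∀ i : Fin k, Option (V i)) :=
  {T | ValidInt R T ∧ strength T ≤ t}

/-- A set of interactions is independent iff no member is a proper subset of another. -/
def Indep (𝒮 : Set (∀ i : Fin k, Option (V i))) : Prop :=
  ∀ T₁ ∈ 𝒮, ∀ T₂ ∈ 𝒮, T₁ ≠ T₂ → ¬ Sub T₁ T₂

/-- `(d,t)`-CDA condition. -/
def IsCDA (R A : Set (∀ i : Fin k, V i)) (d t : ℕ) : Prop :=
  ∀ 𝒯 ⊆ VI R t, 𝒯.Finite → 𝒯.ncard = d →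
    ∀ T ∈ VI R t, ¬ Masks R 𝒯 T → (T ∈ 𝒯 ↔ rho A T ⊆ rhoS A 𝒯)

/-- `(d̄,t)`-CDA condition. -/
def IsCDAdbar (R A : Set (∀ i : Fin k, V i)) (d t : ℕ) : Prop :=
  ∀ 𝒯 ⊆ VI R t, 𝒯.Finite → 𝒯.ncard ≤ d →
    ∀ T ∈ VI R t, ¬ Masks R 𝒯 T → (T ∈ 𝒯 ↔ rho A T ⊆ rhoS A 𝒯)

/-- `(d,t̄)`-CDA condition. -/
def IsCDAtbar (R A : Set (∀ i : Fin k, V i)) (d t : ℕ) : Prop :=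
  ∀ 𝒯 ⊆ VIbar R t, 𝒯.Finite → 𝒯.ncard = d →
    ∀ T ∈ VIbar R t, Indep (𝒯 ∪ {T}) → ¬ Masks R 𝒯 T →
      (T ∈ 𝒯 ↔ rho A T ⊆ rhoS A 𝒯)

/-- `(d̄,t̄)`-CDA condition. -/
def IsCDAdbartbar (R A : Set (∀ i : Fin k, V i)) (d t : ℕ) : Prop :=
  ∀ 𝒯 ⊆ VIbar R t, 𝒯.Finite → 𝒯.ncard ≤ d →
    ∀ T ∈ VIbar R t, Indep (𝒯 ∪ {T}) → ¬ Masks R 𝒯 T →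
      (T ∈ 𝒯 ↔ rho A T ⊆ rhoS A 𝒯)

lemma cda_step (R A : Set (∀ i : Fin k, V i)) (m t : ℕ) (hm : 0 < m)
    (hτ : ∀ 𝒯 ⊆ VI R t, 𝒯.Finite → 𝒯.ncard ≤ m → (R \ rhoS R 𝒯).Nonempty)
    (h : IsCDA R A m t) : IsCDA R A (m - 1) t := by
  intro 𝒯 h𝒯sub h𝒯fin h𝒯card T hT hmask
  by_cases hTin : T ∈ 𝒯
  · exact ⟨fun _ σ hσ => ⟨hσ.1, T, hTin, hσ.2⟩, fun _ => hTin⟩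
  · simp only [hTin, false_iff]
    intro hsub
    -- extract a witness σ₀ showing 𝒯 does not mask T
    have hmask' : ∃ σ₀ ∈ R, Covers T σ₀ ∧ ∀ T' ∈ 𝒯, ¬ Covers T' σ₀ := by
      by_contra hc
      push_neg at hc
      exact hmask ⟨hTin, fun σ hσ hcov => hc σ hσ hcov⟩
    obtain ⟨σ₀, hσ₀R, hσ₀T, hσ₀not⟩ := hmask'
    -- find a valid test case σ covering nothing in 𝒯 ∪ {T}
    have hbig : (𝒯 ∪ {T} : Set _) ⊆ VI R t := by
      intro x hx
      rcases hx with hx | hx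
      · exact h𝒯sub hx
      · rw [Set.mem_singleton_iff] at hx; subst hx; exact hT
    have hfin : (𝒯 ∪ {T} : Set _).Finite := h𝒯fin.union (Set.finite_singleton T)
    have hcard : (𝒯 ∪ {T} : Set _).ncard ≤ m := by
      have h1 : (𝒯 ∪ {T} : Set _).ncard ≤ 𝒯.ncard + 1 := by
        rw [Set.union_singleton]
        exact Set.ncard_insert_le T 𝒯
      omega
    obtain ⟨σ, hσR, hσnot⟩ := hτ _ hbig hfin hcard
    have hσnot' : ∀ T' ∈ (𝒯 ∪ {T} : Set _), ¬ Covers T' σ := by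
      intro T' hT' hcov
      exact hσnot ⟨hσR, T', hT', hcov⟩
    have hσT : ¬ Covers T σ := hσnot' T (Or.inr rfl)
    -- a coordinate where σ disagrees with T
    have hi₀ : ∃ i v, T i = some v ∧ σ i ≠ v := by
      by_contra hc
      push_neg at hc
      exact hσT fun i v hv => hc i v hv
    obtain ⟨i₀, v₀, hTv, hσv⟩ := hi₀
    -- build T* from σ restricted to the domain of T
    set Tstar : ∀ i : Fin k, Option (V i) := fun i => (T i).map (fun _ => σ i) with hTstar
    have hcovstar : Covers Tstar σ := by
      intro i v hv
      simp only [hTstar, Option.map_eq_some_iff] at hv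
      obtain ⟨a, _, ha⟩ := hv
      exact ha
    have hstr : strength Tstar = t := by
      have : strength Tstar = strength T := by
        unfold strength
        congr 1
        apply Finset.filter_congr
        intro i _
        simp [hTstar, Option.isSome_map]
      rw [this, hT.2]
    have hstarVI : Tstar ∈ VI R t := ⟨⟨σ, hσR, hcovstar⟩, hstr⟩
    have hstarnot𝒯 : Tstar ∉ 𝒯 := fun hmem => hσnot' Tstar (Or.inl hmem) hcovstar
    have hTne : T ≠ Tstar := by
      intro he
      exact hσT (he ▸ hcovstar)
    have hstarσ₀ : ¬ Covers Tstar σ₀ := by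
      intro hcov
      have h1 : Tstar i₀ = some (σ i₀) := by simp [hTstar, hTv]
      have h2 : σ₀ i₀ = σ i₀ := hcov i₀ (σ i₀) h1
      have h3 : σ₀ i₀ = v₀ := hσ₀T i₀ v₀ hTv
      exact hσv (h2 ▸ h3)
    -- apply the (m,t)-CDA property to 𝒯 ∪ {Tstar}
    have hsub' : insert Tstar 𝒯 ⊆ VI R t := by
      intro x hx
      rcases hx with hx | hx
      · exact hx ▸ hstarVI
      · exact h𝒯sub hx
    have hfin' : (insert Tstar 𝒯).Finite := h𝒯fin.insert Tstar
    have hcard' : (insert Tstar 𝒯).ncard = m := by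
      rw [Set.ncard_insert_of_notMem hstarnot𝒯 h𝒯fin, h𝒯card]
      omega
    have hTnotin' : T ∉ insert Tstar 𝒯 := by
      intro hmem
      rcases hmem with hmem | hmem
      · exact hTne hmem
      · exact hTin hmem
    have hmask2 : ¬ Masks R (insert Tstar 𝒯) T := by
      intro ⟨_, hall⟩
      obtain ⟨T', hT', hcov'⟩ := hall σ₀ hσ₀R hσ₀T
      rcases hT' with hT' | hT'
      · exact hstarσ₀ (hT' ▸ hcov')
      · exact hσ₀not T' hT' hcov'
    have := h (insert Tstar 𝒯) hsub' hfin' hcard' T hT hmask2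
    have hrsub : rho A T ⊆ rhoS A (insert Tstar 𝒯) := by
      intro σ' hσ'
      obtain ⟨hσ'A, T', hT', hc'⟩ := hsub hσ'
      exact ⟨hσ'A, T', Or.inr hT', hc'⟩
    exact hTnotin' (this.mpr hrsub)

lemma cda_down (R A : Set (∀ i : Fin k, V i)) (d t : ℕ)
    (hτ : ∀ 𝒯 ⊆ VI R t, 𝒯.Finite → 𝒯.ncard ≤ d → (R \ rhoS R 𝒯).Nonempty)
    (h : IsCDA R A d t) : ∀ m ≤ d, IsCDA R A m t := by
  have key : ∀ j, IsCDA R A (d - j) t := by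
    intro j
    induction j with
    | zero => simpa using h
    | succ n ih =>
      by_cases hz : d - n = 0
      · have : d - (n + 1) = d - n := by omega
        rw [this]; exact ih
      · have hstep := cda_step R A (d - n) t (by omega)
          (fun 𝒯 hs hf hc => hτ 𝒯 hs hf (by omega)) ih
        have : d - (n + 1) = d - n - 1 := by omega
        rw [this]; exact hstep
  intro m hm
  have : m = d - (d - m) := by omega
  rw [this]; exact key (d - m)

/-- for `d ≤ τ_t` and `t > 0`, every `(d,t)`-CDA is a `(d-1,t)`-CDA,
hence `(d,t)`-CDAs and `(d̄,t)`-CDAs are equivalent. The hypothesis `hτ`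
expresses `d ≤ τ_t`: every set of at most `d` valid `t`-way interactions leaves
some valid test case uncovered. -/
theorem cda_eq_cdaDbar (R A : Set (∀ i : Fin k, V i)) (hA : A ⊆ R) (d t : ℕ)
    (ht : 0 < t)
    (hτ : ∀ 𝒯 ⊆ VI R t, 𝒯.Finite → 𝒯.ncard ≤ d → (R \ rhoS R 𝒯).Nonempty) :
    (IsCDA R A d t → IsCDA R A (d - 1) t) ∧
      (IsCDA R A d t ↔ IsCDAdbar R A d t) := by
  constructor
  · intro h
    exact cda_down R A d t hτ h (d - 1) (by omega)
  · constructor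
    · intro h 𝒯 hs hf hc T hT hm
      exact cda_down R A d t hτ h 𝒯.ncard hc 𝒯 hs hf rfl T hT hm
    · intro h 𝒯 hs hf hc T hT hm
      exact h 𝒯 hs hf (le_of_eq hc) T hT hm

end CDA
end

section
/- Every (d, t)-CDA is a (d, t)-CLA: if array A of valid test cases satisfies the (d,t)-CDA condition, then for any two distinct distinguishable sets 𝒯₁, 𝒯₂ ⊆ 𝒱ℐ_t with |𝒯₁| = |𝒯₂| = d, we have ρ_A(𝒯₁) ≠ ρ_A(𝒯₂). -/
namespace CDA

variable {k : ℕ} {V : Fin k → Type}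

/-- every `(d,t)`-CDA is a `(d,t)`-CLA. -/
theorem cda_is_cla (R A : Set (∀ i : Fin k, V i)) (hA : A ⊆ R) (d t : ℕ)
    (h : IsCDA R A d t) :
    ∀ 𝒯₁ ⊆ VI R t, ∀ 𝒯₂ ⊆ VI R t, 𝒯₁.Finite → 𝒯₂.Finite →
      𝒯₁.ncard = d → 𝒯₂.ncard = d → 𝒯₁ ≠ 𝒯₂ →
      (∃ B ⊆ R, rhoS B 𝒯₁ ≠ rhoS B 𝒯₂) →
      rhoS A 𝒯₁ ≠ rhoS A 𝒯₂ := by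
  intro 𝒯₁ h1 𝒯₂ h2 hf1 hf2 hc1 hc2 hne ⟨B, hB, hBne⟩ heq
  -- get σ in one rhoS B but not the other
  have key : ∀ (S₁ S₂ : Set (∀ i : Fin k, Option (V i))), S₁ ⊆ VI R t → S₂ ⊆ VI R t →
      S₂.Finite → S₂.ncard = d → rhoS A S₁ = rhoS A S₂ →
      ∀ σ, σ ∈ R → (∃ T ∈ S₁, Covers T σ) → (¬ ∃ T' ∈ S₂, Covers T' σ) → False := by
    intro S₁ S₂ hS1 hS2 hfin hcard heqA σ hσR ⟨T, hTS, hTcov⟩ hnot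
    have hnm : ¬ Masks R S₂ T := by
      rintro ⟨-, hall⟩
      exact hnot (hall σ hσR hTcov)
    have hiff := h S₂ hS2 hfin hcard T (hS1 hTS) hnm
    have hsub : rho A T ⊆ rhoS A S₂ := by
      rw [← heqA]
      rintro σ' ⟨hσ'A, hcov⟩
      exact ⟨hσ'A, T, hTS, hcov⟩
    exact hnot ⟨T, hiff.mpr hsub, hTcov⟩
  apply hBne
  ext σ
  constructor
  · rintro ⟨hσB, hex⟩
    refine ⟨hσB, ?_⟩
    by_contra hnot
    exact key 𝒯₁ 𝒯₂ h1 h2 hf2 hc2 heq σ (hB hσB) hex hnot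
  · rintro ⟨hσB, hex⟩
    refine ⟨hσB, ?_⟩
    by_contra hnot
    exact key 𝒯₂ 𝒯₁ h2 h1 hf1 hc1 heq.symm σ (hB hσB) hex hnot

end CDA
end

section
/- Every (d̄, t)-CDA is a (d̄, t)-CLA: if A satisfies the (d̄,t)-CDA condition, then for any two distinct distinguishable sets 𝒯₁, 𝒯₂ ⊆ 𝒱ℐ_t with 0 ≤ |𝒯₁|, |𝒯₂| ≤ d, ρ_A(𝒯₁) ≠ ρ_A(𝒯₂). -/
namespace CDA

variable {k : ℕ} {V : Fin k → Type}

lemma aux_cla {k : ℕ} {V : Fin k → Type} (R A : Set (∀ i : Fin k, V i))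
    (hA : A ⊆ R) (d t : ℕ) (h : IsCDAdbar R A d t)
    (𝒯₁ 𝒯₂ : Set (∀ i : Fin k, Option (V i)))
    (h1 : 𝒯₁ ⊆ VI R t) (h2 : 𝒯₂ ⊆ VI R t)
    (hf2 : 𝒯₂.Finite) (hc2 : 𝒯₂.ncard ≤ d)
    (B : Set (∀ i : Fin k, V i)) (hB : B ⊆ R)
    (σ : ∀ i : Fin k, V i) (hσ1 : σ ∈ rhoS B 𝒯₁) (hσ2 : σ ∉ rhoS B 𝒯₂) :
    rhoS A 𝒯₁ ≠ rhoS A 𝒯₂ := by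
  obtain ⟨hσB, T, hT1, hcov⟩ := hσ1
  have hT2 : T ∉ 𝒯₂ := fun hmem => hσ2 ⟨hσB, T, hmem, hcov⟩
  have hnm : ¬ Masks R 𝒯₂ T := by
    rintro ⟨-, hm⟩
    obtain ⟨T', hT', hcov'⟩ := hm σ (hB hσB) hcov
    exact hσ2 ⟨hσB, T', hT', hcov'⟩
  have hiff := h 𝒯₂ h2 hf2 hc2 T (h1 hT1) hnm
  have hnsub : ¬ rho A T ⊆ rhoS A 𝒯₂ := fun hs => hT2 (hiff.mpr hs)
  obtain ⟨τ, hτ, hτ2⟩ := Set.not_subset.mp hnsub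
  have hτ1 : τ ∈ rhoS A 𝒯₁ := ⟨hτ.1, T, hT1, hτ.2⟩
  intro heq
  rw [heq] at hτ1
  exact hτ2 hτ1

/-- every `(d̄,t)`-CDA is a `(d̄,t)`-CLA. -/
theorem cdaDbar_is_claDbar (R A : Set (∀ i : Fin k, V i)) (hA : A ⊆ R) (d t : ℕ)
    (h : IsCDAdbar R A d t) :
    ∀ 𝒯₁ ⊆ VI R t, ∀ 𝒯₂ ⊆ VI R t, 𝒯₁.Finite → 𝒯₂.Finite →
      𝒯₁.ncard ≤ d → 𝒯₂.ncard ≤ d → 𝒯₁ ≠ 𝒯₂ →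
      (∃ B ⊆ R, rhoS B 𝒯₁ ≠ rhoS B 𝒯₂) →
      rhoS A 𝒯₁ ≠ rhoS A 𝒯₂ := by
  rintro 𝒯₁ h1 𝒯₂ h2 hf1 hf2 hc1 hc2 hne ⟨B, hB, hBne⟩
  obtain ⟨σ, hσ⟩ : ∃ σ, ¬ (σ ∈ rhoS B 𝒯₁ ↔ σ ∈ rhoS B 𝒯₂) := by
    by_contra hc
    push_neg at hc
    exact hBne (Set.ext fun σ => (hc σ))
  by_cases hmem : σ ∈ rhoS B 𝒯₁
  · have hσ2 : σ ∉ rhoS B 𝒯₂ := fun hm => hσ (iff_of_true hmem hm)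
    exact aux_cla R A hA d t h 𝒯₁ 𝒯₂ h1 h2 hf2 hc2 B hB σ hmem hσ2
  · have hσ2 : σ ∈ rhoS B 𝒯₂ := by
      by_contra hm; exact hσ (iff_of_false hmem hm)
    exact (aux_cla R A hA d t h 𝒯₂ 𝒯₁ h2 h1 hf1 hc1 B hB σ hσ2 hmem).symm

end CDA
end

section
/- Every (t+d)-CCA is a (d̄, t̄)-CDA: if an array A of valid test cases covers every valid interaction of strength at most t+d, then for all independent families 𝒯 ∪ {T} of valid interactions of strength ≤ t with |𝒯| ≤ d, if 𝒯 does not mask T then T ∈ 𝒯 ⇔ ρ_A(T) ⊆ ρ_A(𝒯). -/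
namespace CDA

variable {k : ℕ} {V : Fin k → Type}

/-- every `(t+d)`-CCA is a `(d̄,t̄)`-CDA. -/
theorem cca_is_cdaDbarTbar (R A : Set (∀ i : Fin k, V i)) (hA : A ⊆ R) (d t : ℕ)
    (hcca : ∀ T : ∀ i : Fin k, Option (V i),
      ValidInt R T → strength T ≤ t + d → (rho A T).Nonempty) :
    IsCDAdbartbar R A d t := by
  classical
  intro 𝒯 h𝒯sub h𝒯fin h𝒯card T hT _hIndep hNotMask
  constructor
  · intro hTmem σ hσ
    exact ⟨hσ.1, T, hTmem, hσ.2⟩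
  · intro hsub
    by_contra hTnot
    rw [Masks] at hNotMask
    push_neg at hNotMask
    obtain ⟨σ, hσR, hσT, hσno⟩ := hNotMask hTnot
    have hchoice : ∀ T' ∈ 𝒯, ∃ i : Fin k, ∃ v : V i, T' i = some v ∧ σ i ≠ v := by
      intro T' hT'
      have h := hσno T' hT'
      simp only [Covers] at h
      push_neg at h
      exact h
    choose idx val hval hne using hchoice
    set S : Finset (Fin k) := h𝒯fin.toFinset.attach.image
      (fun x => idx x.1 (h𝒯fin.mem_toFinset.mp x.2)) with hS
    set T₂ : ∀ i : Fin k, Option (V i) :=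
      fun i => if (T i).isSome ∨ i ∈ S then some (σ i) else none with hT₂
    have hcov : Covers T₂ σ := by
      intro i v hv
      simp only [hT₂] at hv
      split at hv
      · exact Option.some_inj.mp hv
      · exact absurd hv (by simp)
    have hvalid : ValidInt R T₂ := ⟨σ, hσR, hcov⟩
    have hstr : strength T₂ ≤ t + d := by
      have hsubset : (Finset.univ.filter (fun i => (T₂ i).isSome)) ⊆
          (Finset.univ.filter (fun i => (T i).isSome)) ∪ S := by
        intro i hi
        simp only [Finset.mem_filter, Finset.mem_univ, true_and, hT₂] at hi
        by_cases h : (T i).isSome ∨ i ∈ S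
        · rcases h with h | h
          · exact Finset.mem_union_left _ (by simp [h])
          · exact Finset.mem_union_right _ h
        · simp [h] at hi
      have hScard : S.card ≤ d := by
        calc S.card ≤ h𝒯fin.toFinset.attach.card := Finset.card_image_le
          _ = 𝒯.ncard := by
              rw [Finset.card_attach, Set.ncard_eq_toFinset_card 𝒯 h𝒯fin]
          _ ≤ d := h𝒯card
      calc strength T₂ ≤ ((Finset.univ.filter (fun i => (T i).isSome)) ∪ S).card :=
            Finset.card_le_card hsubset
        _ ≤ (Finset.univ.filter (fun i => (T i).isSome)).card + S.card :=
            Finset.card_union_le _ _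
        _ ≤ t + d := Nat.add_le_add hT.2 hScard
    obtain ⟨τ, hτA, hτcov⟩ := hcca T₂ hvalid hstr
    have hτT : Covers T τ := by
      intro i v hv
      have : T₂ i = some (σ i) := by simp [hT₂, hv]
      rw [hτcov i (σ i) this, hσT i v hv]
    obtain ⟨_, T'', hT''mem, hT''cov⟩ := hsub ⟨hτA, hτT⟩
    have hidxS : idx T'' hT''mem ∈ S := by
      rw [hS]
      exact Finset.mem_image.mpr ⟨⟨T'', h𝒯fin.mem_toFinset.mpr hT''mem⟩,
        Finset.mem_attach _ _, rfl⟩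
    have h1 : τ (idx T'' hT''mem) = val T'' hT''mem :=
      hT''cov _ _ (hval T'' hT''mem)
    have h2 : τ (idx T'' hT''mem) = σ (idx T'' hT''mem) :=
      hτcov _ _ (by simp [hT₂, hidxS])
    exact hne T'' hT''mem (h2 ▸ h1)

end CDA
end

section
/- Key covering-interaction construction: let 𝒯 be a set of at most d valid interactions, each of strength between 1 and t, and T a valid interaction of strength at most t with T ∉ 𝒯 such that 𝒯 does not mask T. Then there exists a valid interaction T̂ of strength at most t + d such that T ⊆ T̂ and no valid test case covers both T̂ and any member of 𝒯. -/
namespace CDA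

variable {k : ℕ} {V : Fin k → Type}

/-- covering-interaction construction: there is a valid interaction
`T̂` of strength at most `t + d` extending `T` such that no valid test case
covers both `T̂` and a member of `𝒯`. -/
theorem covering_interaction_construction (R : Set (∀ i : Fin k, V i))
    (𝒯 : Set (∀ i : Fin k, Option (V i))) (T : ∀ i : Fin k, Option (V i))
    (d t : ℕ) (hfin : 𝒯.Finite) (hcard : 𝒯.ncard ≤ d)
    (h𝒯 : ∀ T' ∈ 𝒯, ValidInt R T' ∧ 1 ≤ strength T' ∧ strength T' ≤ t)
    (hT : ValidInt R T) (hTs : strength T ≤ t) (hTn : T ∉ 𝒯)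
    (hm : ¬ Masks R 𝒯 T) :
    ∃ That : ∀ i : Fin k, Option (V i),
      ValidInt R That ∧ strength That ≤ t + d ∧ Sub T That ∧
        ∀ σ ∈ R, Covers That σ → ∀ T' ∈ 𝒯, ¬ Covers T' σ := by
  classical
  rw [Masks, not_and_or] at hm
  rcases hm with h | h
  · exact absurd (not_not.mp h) hTn
  push_neg at h
  obtain ⟨σ, hσR, hσT, hσ𝒯⟩ := h
  have hchoice : ∀ T' : 𝒯, ∃ i : Fin k, ∃ v : V i,
      (T' : ∀ i, Option (V i)) i = some v ∧ σ i ≠ v := by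
    rintro ⟨T', hT'⟩
    have h2 := hσ𝒯 T' hT'
    simp only [Covers] at h2
    push_neg at h2
    exact h2
  choose f g hf1 hf2 using hchoice
  set S : Finset (Fin k) :=
    hfin.toFinset.attach.image
      (fun x => f ⟨x.1, hfin.mem_toFinset.mp x.2⟩) with hS
  set That : ∀ i : Fin k, Option (V i) :=
    fun i => if i ∈ S then some (σ i) else T i with hThat
  have hcovThat : Covers That σ := by
    intro i v hv
    simp only [hThat] at hv
    split at hv
    · exact Option.some_inj.mp hv
    · exact hσT i v hv
  refine ⟨That, ⟨σ, hσR, hcovThat⟩, ?_, ?_, ?_⟩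
  · -- strength bound
    have hsub : (Finset.univ.filter (fun i => (That i).isSome)) ⊆
        (Finset.univ.filter (fun i => (T i).isSome)) ∪ S := by
      intro i hi
      simp only [Finset.mem_filter, Finset.mem_univ, true_and, hThat] at hi
      by_cases hiS : i ∈ S
      · exact Finset.mem_union_right _ hiS
      · rw [if_neg hiS] at hi
        exact Finset.mem_union_left _ (by simp [hi])
    calc strength That ≤ ((Finset.univ.filter (fun i => (T i).isSome)) ∪ S).card :=
          Finset.card_le_card hsub
      _ ≤ (Finset.univ.filter (fun i => (T i).isSome)).card + S.card :=
          Finset.card_union_le _ _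
      _ ≤ t + d := by
          refine Nat.add_le_add hTs ?_
          calc S.card ≤ hfin.toFinset.attach.card := Finset.card_image_le
            _ = hfin.toFinset.card := Finset.card_attach
            _ = 𝒯.ncard := (Set.ncard_eq_toFinset_card 𝒯 hfin).symm
            _ ≤ d := hcard
  · -- Sub T That
    intro i v hv
    simp only [hThat]
    by_cases hiS : i ∈ S
    · rw [if_pos hiS, hσT i v hv]
    · rw [if_neg hiS]; exact hv
  · -- no valid test covering That covers any member of 𝒯
    intro τ hτR hτThat T' hT' hcov
    set x : 𝒯 := ⟨T', hT'⟩ with hx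
    have hiS : f x ∈ S := by
      rw [hS]
      exact Finset.mem_image.mpr ⟨⟨T', hfin.mem_toFinset.mpr hT'⟩,
        Finset.mem_attach _ _, rfl⟩
    have h1 : τ (f x) = σ (f x) := by
      apply hτThat
      simp only [hThat, if_pos hiS]
    have h2 : τ (f x) = g x := hcov _ _ (hf1 x)
    exact hf2 x (h1 ▸ h2)

end CDA
end

section
/- In a (d̄, t̄)-CDA A, if the set 𝒯 of faulty interactions has size at most d, all members of 𝒯 have strength at most t, and a valid interaction T of strength at most t satisfies: 𝒯 does not mask T and 𝒯 contains neither proper subsets nor proper supersets of T, then T ∈ 𝒯 ⇔ ρ_A(T) ⊆ ρ_A(𝒯), even if 𝒯 itself is not independent. -/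
/-!
Pass from `𝒯` to its `Sub`-minimal members `𝒯_min`. Every member of `𝒯` lies above one of
`𝒯_min`, so both cover the same rows of `A`; since `𝒯` has no proper subset of `T`, `T ∈ 𝒯` iff
`T ∈ 𝒯_min`; since it has no proper superset either, `𝒯_min ∪ {T}` is independent; and a masking
of `T` by `𝒯_min` would be one by `𝒯`. The `(d̄,t̄)`-CDA condition applied to `𝒯_min` then gives
the claim for `𝒯`.
-/

namespace CDA

variable {k : ℕ} {V : Fin k → Type}

section

variable {T₁ T₂ : ∀ i : Fin k, Option (V i)}

lemma Covers.of_sub {σ : ∀ i : Fin k, V i} (hs : Sub T₁ T₂) (hc : Covers T₂ σ) :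
    Covers T₁ σ :=
  fun i v hv => hc i v (hs i v hv)

lemma Sub.trans {T₃ : ∀ i : Fin k, Option (V i)} (h₁₂ : Sub T₁ T₂) (h₂₃ : Sub T₂ T₃) :
    Sub T₁ T₃ :=
  fun i v hv => h₂₃ i v (h₁₂ i v hv)

lemma Sub.support_subset (hs : Sub T₁ T₂) :
    Finset.univ.filter (fun i => (T₁ i).isSome) ⊆
      Finset.univ.filter (fun i => (T₂ i).isSome) := by
  intro i hi
  simp only [Finset.mem_filter, Finset.mem_univ, true_and, Option.isSome_iff_exists] at *
  obtain ⟨v, hv⟩ := hi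
  exact ⟨v, hs i v hv⟩

lemma Sub.eq_of_strength_le (hs : Sub T₁ T₂) (hle : strength T₂ ≤ strength T₁) : T₁ = T₂ := by
  have hsupp := Finset.eq_of_subset_of_card_le hs.support_subset hle
  funext i
  cases h₁ : T₁ i with
  | some v => exact (hs i v h₁).symm
  | none =>
    cases h₂ : T₂ i with
    | none => rfl
    | some w =>
      have hi : i ∈ Finset.univ.filter (fun i => (T₁ i).isSome) := by
        rw [hsupp]; simp [h₂]
      simp [h₁] at hi

end

/-- The paper's `𝒯_min`. -/
def minimalElems (𝒯 : Set (∀ i : Fin k, Option (V i))) : Set (∀ i : Fin k, Option (V i)) :=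
  {T' ∈ 𝒯 | ∀ T'' ∈ 𝒯, Sub T'' T' → T'' = T'}

section

variable {𝒯 : Set (∀ i : Fin k, Option (V i))}

lemma minimalElems_subset : minimalElems 𝒯 ⊆ 𝒯 := fun _ hT' => hT'.1

/-- A sub-interaction of `T'` in `𝒯` of least strength is minimal in `𝒯`. -/
lemma exists_mem_minimalElems_sub {T' : ∀ i : Fin k, Option (V i)} (hT' : T' ∈ 𝒯) :
    ∃ m ∈ minimalElems 𝒯, Sub m T' := by
  obtain ⟨m, ⟨hm𝒯, hmT'⟩, hleast⟩ :=
    (measure (strength (V := V))).wf.has_min {x ∈ 𝒯 | Sub x T'} ⟨T', hT', fun _ _ hv => hv⟩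
  refine ⟨m, ⟨hm𝒯, fun T'' hT'' hsub => ?_⟩, hmT'⟩
  exact hsub.eq_of_strength_le (not_lt.mp (hleast T'' ⟨hT'', hsub.trans hmT'⟩))

lemma rhoS_minimalElems (A : Set (∀ i : Fin k, V i)) : rhoS A (minimalElems 𝒯) = rhoS A 𝒯 := by
  ext σ
  constructor
  · rintro ⟨hσA, T', hT', hc⟩
    exact ⟨hσA, T', minimalElems_subset hT', hc⟩
  · rintro ⟨hσA, T', hT', hc⟩
    obtain ⟨m, hm, hsub⟩ := exists_mem_minimalElems_sub hT'
    exact ⟨hσA, m, hm, hc.of_sub hsub⟩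

variable {T : ∀ i : Fin k, Option (V i)}

lemma mem_minimalElems_iff (hbelow : ∀ T' ∈ 𝒯, Sub T' T → T' = T) :
    T ∈ minimalElems 𝒯 ↔ T ∈ 𝒯 :=
  ⟨fun hT => hT.1, fun hT => ⟨hT, hbelow⟩⟩

lemma indep_minimalElems_union (hbelow : ∀ T' ∈ 𝒯, Sub T' T → T' = T)
    (habove : ∀ T' ∈ 𝒯, Sub T T' → T = T') : Indep (minimalElems 𝒯 ∪ {T}) := by
  rintro T₁ (hT₁ | rfl) T₂ (hT₂ | rfl) hne hsub
  · exact hne (hT₂.2 T₁ hT₁.1 hsub)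
  · exact hne (hbelow T₁ hT₁.1 hsub)
  · exact hne (habove T₂ hT₂.1 hsub)
  · exact hne rfl

lemma Masks.mono {R : Set (∀ i : Fin k, V i)} {𝒮 : Set (∀ i : Fin k, Option (V i))}
    (hmask : Masks R 𝒮 T) (h𝒮 : 𝒮 ⊆ 𝒯) (hT : T ∉ 𝒯) : Masks R 𝒯 T :=
  ⟨hT, fun σ hσ hc => (hmask.2 σ hσ hc).imp fun _ hT' => ⟨h𝒮 hT'.1, hT'.2⟩⟩

end

theorem cdaDbarTbar_identification_general (R A : Set (∀ i : Fin k, V i))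
    (d t : ℕ) (h : IsCDAdbartbar R A d t)
    (𝒯 : Set (∀ i : Fin k, Option (V i))) (h𝒯 : 𝒯 ⊆ VIbar R t)
    (hfin : 𝒯.Finite) (hcard : 𝒯.ncard ≤ d)
    (T : ∀ i : Fin k, Option (V i)) (hT : T ∈ VIbar R t)
    (hm : ¬ Masks R 𝒯 T)
    (hnosub : ∀ T' ∈ 𝒯, ¬ (Sub T' T ∧ T' ≠ T) ∧ ¬ (Sub T T' ∧ T ≠ T')) :
    T ∈ 𝒯 ↔ rho A T ⊆ rhoS A 𝒯 := by
  have hbelow : ∀ T' ∈ 𝒯, Sub T' T → T' = T := fun T' hT' hs =>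
    by_contra fun hne => (hnosub T' hT').1 ⟨hs, hne⟩
  have habove : ∀ T' ∈ 𝒯, Sub T T' → T = T' := fun T' hT' hs =>
    by_contra fun hne => (hnosub T' hT').2 ⟨hs, hne⟩
  have hmem := mem_minimalElems_iff hbelow
  have hcda := h (minimalElems 𝒯) (minimalElems_subset.trans h𝒯)
    (hfin.subset minimalElems_subset) ((Set.ncard_le_ncard minimalElems_subset hfin).trans hcard)
    T hT (indep_minimalElems_union hbelow habove)
    (fun hmask => hm (hmask.mono minimalElems_subset (hmem.not.mp hmask.1)))
  rw [← hmem, hcda, rhoS_minimalElems]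

/-- in a `(d̄,t̄)`-CDA, if `𝒯` does not mask `T` and contains
neither proper subsets nor proper supersets of `T`, then
`T ∈ 𝒯 ↔ ρ_A(T) ⊆ ρ_A(𝒯)`, even if `𝒯` itself is not independent. -/
theorem cdaDbarTbar_identification (R A : Set (∀ i : Fin k, V i)) (hA : A ⊆ R)
    (d t : ℕ) (h : IsCDAdbartbar R A d t)
    (𝒯 : Set (∀ i : Fin k, Option (V i))) (h𝒯 : 𝒯 ⊆ VIbar R t)
    (hfin : 𝒯.Finite) (hcard : 𝒯.ncard ≤ d)
    (T : ∀ i : Fin k, Option (V i)) (hT : T ∈ VIbar R t)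
    (hm : ¬ Masks R 𝒯 T)
    (hnosub : ∀ T' ∈ 𝒯, ¬ (Sub T' T ∧ T' ≠ T) ∧ ¬ (Sub T T' ∧ T ≠ T')) :
    T ∈ 𝒯 ↔ rho A T ⊆ rhoS A 𝒯 :=
  cdaDbarTbar_identification_general R A d t h 𝒯 h𝒯 hfin hcard T hT hm hnosub

end CDA
end

section
/- If 𝒯 does not mask T and T ∉ 𝒯, and T′ is any valid interaction appearing in some valid test case that covers none of 𝒯 ∪ {T} and having the same parameter set as T but a different value on at least one parameter, then 𝒯 ∪ {T′} does not mask T. -/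
namespace CDA

variable {k : ℕ} {V : Fin k → Type}

/-- if `𝒯` does not mask `T`, `T ∉ 𝒯`, and `T'` is a valid
interaction covered by some valid test case avoiding all of `𝒯 ∪ {T}`, with the
same parameter set as `T` but a different value on some parameter, then
`𝒯 ∪ {T'}` does not mask `T`. -/
theorem unmasking_extension (R : Set (∀ i : Fin k, V i))
    (𝒯 : Set (∀ i : Fin k, Option (V i))) (T T' : ∀ i : Fin k, Option (V i))
    (hTn : T ∉ 𝒯) (hm : ¬ Masks R 𝒯 T)
    (hT' : ∃ σ₀ ∈ R, Covers T' σ₀ ∧ ¬ Covers T σ₀ ∧ ∀ T'' ∈ 𝒯, ¬ Covers T'' σ₀)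
    (hsame : ∀ i, (T i).isSome ↔ (T' i).isSome)
    (hdiff : ∃ (i : Fin k) (v v' : V i), T i = some v ∧ T' i = some v' ∧ v ≠ v') :
    ¬ Masks R (𝒯 ∪ {T'}) T := by
  intro hM
  -- From hm and hTn, obtain a witness σ covering T but no member of 𝒯
  rw [Masks] at hm
  push_neg at hm
  obtain ⟨σ, hσR, hσT, hσ𝒯⟩ := hm hTn
  obtain ⟨i, v, v', hv, hv', hne⟩ := hdiff
  obtain ⟨T'', hT''mem, hT''cov⟩ := hM.2 σ hσR hσT
  rcases hT''mem with h | h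
  · exact (hσ𝒯 T'' h) hT''cov
  · subst h
    have : σ i = v := hσT i v hv
    have h2 : σ i = v' := hT''cov i v' hv'
    exact hne (this ▸ h2)

end CDA
end
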